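/- arXiv:2105.07676 — 2 statements merged into one kernel-verified Lean document; each statement's English description precedes it below -/
import Mathlib

section
/- Let F : ℂ \ {−1} → ℂ be given by F(s) = s(s−1)/(s+1)². Then for every d ∈ ℕ and all complex numbers c₀, c₁, …, c_d, it is not the case that |F(s+1) − (c₀ + c₁ F(s) + c₂ F(s)² + ⋯ + c_d F(s)^d)| < 1/10 for all s ∈ ℂ with Re(s) ≥ 0. Equivalently, for every polynomial p ∈ ℂ[X] there exists s ∈ ℂ with Re(s) ≥ 0 and |F(s+1) − p(F(s))| ≥ 1/10. -/
/-- Let `F : ℂ ∖ {−1} → ℂ` be given by `F(s) = s(s−1)/(s+1)²`. For every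
polynomial `p ∈ ℂ[X]` there exists `s ∈ ℂ` with `Re(s) ≥ 0` and
`|F(s+1) − p(F(s))| ≥ 1/10`. -/
theorem stmt_10 (F : ℂ → ℂ) (hF : ∀ s : ℂ, s ≠ -1 → F s = s * (s - 1) / (s + 1) ^ 2)
    (p : Polynomial ℂ) :
    ∃ s : ℂ, 0 ≤ s.re ∧ 1 / 10 ≤ ‖F (s + 1) - p.eval (F s)‖ := by
  have h0 : F 0 = 0 := by rw [hF 0 (by norm_num)]; norm_num
  have h1 : F 1 = 0 := by rw [hF 1 (by norm_num)]; norm_num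
  have h2 : F 2 = 2 / 9 := by rw [hF 2 (by norm_num)]; norm_num
  by_contra h
  push_neg at h
  have a := h 0 (by norm_num)
  have b := h 1 (by norm_num)
  rw [zero_add, h1, h0] at a
  rw [show (1 : ℂ) + 1 = 2 from by norm_num, h2, h1] at b
  have key : ‖((2 : ℂ) / 9)‖ ≤
      ‖((2 : ℂ) / 9 - p.eval 0)‖ + ‖(0 - p.eval 0)‖ := by
    calc ‖((2 : ℂ) / 9)‖
        = ‖(((2 : ℂ) / 9 - p.eval 0) - (0 - p.eval 0))‖ := by ring_nf
      _ ≤ _ := norm_sub_le _ _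
  have habs : ‖((2 : ℂ) / 9)‖ = 2 / 9 := by
    rw [norm_div, Complex.norm_two]
    norm_num [Complex.norm_ofNat]
  rw [habs] at key
  linarith
end

section
/- The complement in ℂ of the set K := { (z + z²)/2 : z ∈ ℂ, |z| ≤ 1 } is connected; in particular, ℂ \ K has no bounded connected components. -/
open Complex Set

private lemma aux_two_lt_abs_iff (u : ℂ) :
    2 < ‖u - 1‖ ↔ 4 < (u.re - 1) ^ 2 + u.im ^ 2 := by
  have h2 : (‖u - 1‖) ^ 2 = (u.re - 1) ^ 2 + u.im ^ 2 := by
    rw [Complex.sq_norm, Complex.normSq_apply]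
    simp [Complex.sub_re, Complex.sub_im]
    ring
  constructor <;> intro h <;>
    nlinarith [norm_nonneg (u - 1)]

/-- The auxiliary set in the `s`-plane. -/
private def auxS : Set ℂ := {s : ℂ | 0 ≤ s.re ∧ 2 < ‖s - 1‖}

private lemma aux_convex_re_im (P Q : Set ℝ) (hP : Convex ℝ P) (hQ : Convex ℝ Q) :
    Convex ℝ {u : ℂ | u.re ∈ P ∧ u.im ∈ Q} := by
  intro x hx y hy a b ha hb hab
  constructor
  · have := hP hx.1 hy.1 ha hb hab
    simpa [Complex.add_re, Complex.smul_re, smul_eq_mul] using this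
  · have := hQ hx.2 hy.2 ha hb hab
    simpa [Complex.add_im, Complex.smul_im, smul_eq_mul] using this

private lemma aux_joinedIn_of_convex {C S : Set ℂ} (hC : Convex ℝ C) (hCS : C ⊆ S)
    {x y : ℂ} (hx : x ∈ C) (hy : y ∈ C) : JoinedIn S x y :=
  ((hC.isPathConnected ⟨x, hx⟩).joinedIn x hx y hy).mono hCS

private lemma aux_mem4 : (4 : ℂ) ∈ auxS := by
  constructor
  · norm_num
  · have : (4 : ℂ) - 1 = 3 := by norm_num
    rw [this]
    norm_num

private lemma auxS_pathConnected : IsPathConnected auxS := by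
  refine ⟨4, aux_mem4, ?_⟩
  intro s hs
  obtain ⟨hre, habs⟩ := hs
  have hsq : 4 < (s.re - 1) ^ 2 + s.im ^ 2 := (aux_two_lt_abs_iff s).1 habs
  -- piece C2 (upper strip) and C2' (lower strip), C3 (vertical line re=4)
  have hC3sub : {u : ℂ | u.re ∈ ({(4:ℝ)} : Set ℝ) ∧ u.im ∈ (univ : Set ℝ)} ⊆ auxS := by
    intro u hu
    have h4 : u.re = 4 := hu.1
    refine ⟨by rw [h4]; norm_num, (aux_two_lt_abs_iff u).2 (by rw [h4]; nlinarith [sq_nonneg u.im])⟩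
  have hC3conv : Convex ℝ {u : ℂ | u.re ∈ ({(4:ℝ)} : Set ℝ) ∧ u.im ∈ (univ : Set ℝ)} :=
    aux_convex_re_im _ _ (convex_singleton _) convex_univ
  rcases le_or_gt 0 s.im with him | him
  · -- go up
    set h : ℝ := max 3 s.im with hh
    have h3 : (3:ℝ) ≤ h := le_max_left _ _
    have hsh : s.im ≤ h := le_max_right _ _
    set p : ℂ := (s.re : ℂ) + (h : ℝ) * Complex.I with hp
    have hpre : p.re = s.re := by simp [hp]
    have hpim : p.im = h := by simp [hp]
    set q : ℂ := (4 : ℂ) + (3 : ℝ) * Complex.I with hq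
    have hqre : q.re = 4 := by simp [hq]
    have hqim : q.im = 3 := by simp [hq]
    -- C1 : vertical ray upward from s
    have hC1sub : {u : ℂ | u.re ∈ ({s.re} : Set ℝ) ∧ u.im ∈ Ici s.im} ⊆ auxS := by
      intro u hu
      have h1 : u.re = s.re := hu.1
      have h2 : s.im ≤ u.im := hu.2
      refine ⟨by rw [h1]; exact hre, (aux_two_lt_abs_iff u).2 ?_⟩
      rw [h1]
      nlinarith
    have hC2sub : {u : ℂ | u.re ∈ Ici (0:ℝ) ∧ u.im ∈ Ioi (2:ℝ)} ⊆ auxS := by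
      intro u hu
      refine ⟨hu.1, (aux_two_lt_abs_iff u).2 ?_⟩
      have h2 : (2:ℝ) < u.im := hu.2
      nlinarith [sq_nonneg (u.re - 1)]
    have J1 : JoinedIn auxS s p := by
      refine aux_joinedIn_of_convex (aux_convex_re_im _ _ (convex_singleton _) (convex_Ici _))
        hC1sub ⟨rfl, Set.self_mem_Ici⟩ ⟨hpre, ?_⟩
      rw [hpim]; exact hsh
    have J2 : JoinedIn auxS p q := by
      refine aux_joinedIn_of_convex (aux_convex_re_im _ _ (convex_Ici _) (convex_Ioi _))
        hC2sub ⟨?_, ?_⟩ ⟨?_, ?_⟩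
      · rw [hpre]; exact hre
      · rw [hpim]; exact lt_of_lt_of_le (by norm_num) h3
      · rw [hqre]; norm_num
      · rw [hqim]; norm_num
    have J3 : JoinedIn auxS q 4 := by
      refine aux_joinedIn_of_convex hC3conv hC3sub ⟨hqre, trivial⟩ ⟨?_, trivial⟩
      norm_num
    exact (J1.trans (J2.trans J3)).symm
  · -- go down
    set h : ℝ := min (-3) s.im with hh
    have h3 : h ≤ (-3:ℝ) := min_le_left _ _
    have hsh : h ≤ s.im := min_le_right _ _
    set p : ℂ := (s.re : ℂ) + (h : ℝ) * Complex.I with hp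
    have hpre : p.re = s.re := by simp [hp]
    have hpim : p.im = h := by simp [hp]
    set q : ℂ := (4 : ℂ) + (-3 : ℝ) * Complex.I with hq
    have hqre : q.re = 4 := by simp [hq]
    have hqim : q.im = -3 := by simp [hq]
    have hC1sub : {u : ℂ | u.re ∈ ({s.re} : Set ℝ) ∧ u.im ∈ Iic s.im} ⊆ auxS := by
      intro u hu
      have h1 : u.re = s.re := hu.1
      have h2 : u.im ≤ s.im := hu.2
      refine ⟨by rw [h1]; exact hre, (aux_two_lt_abs_iff u).2 ?_⟩
      rw [h1]
      nlinarith
    have hC2sub : {u : ℂ | u.re ∈ Ici (0:ℝ) ∧ u.im ∈ Iio (-2:ℝ)} ⊆ auxS := by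
      intro u hu
      refine ⟨hu.1, (aux_two_lt_abs_iff u).2 ?_⟩
      have h2 : u.im < -2 := hu.2
      nlinarith [sq_nonneg (u.re - 1)]
    have J1 : JoinedIn auxS s p := by
      refine aux_joinedIn_of_convex (aux_convex_re_im _ _ (convex_singleton _) (convex_Iic _))
        hC1sub ⟨rfl, Set.self_mem_Iic⟩ ⟨hpre, ?_⟩
      rw [hpim]; exact hsh
    have J2 : JoinedIn auxS p q := by
      refine aux_joinedIn_of_convex (aux_convex_re_im _ _ (convex_Ici _) (convex_Iio _))
        hC2sub ⟨?_, ?_⟩ ⟨?_, ?_⟩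
      · rw [hpre]; exact hre
      · rw [hpim]; exact lt_of_le_of_lt h3 (by norm_num)
      · rw [hqre]; norm_num
      · rw [hqim]; norm_num
    have J3 : JoinedIn auxS q 4 := by
      refine aux_joinedIn_of_convex hC3conv hC3sub ⟨hqre, trivial⟩ ⟨?_, trivial⟩
      norm_num
    exact (J1.trans (J2.trans J3)).symm

private lemma aux_compl_eq :
    ({w : ℂ | ∃ z : ℂ, ‖z‖ ≤ 1 ∧ w = (z + z ^ 2) / 2}ᶜ : Set ℂ) =
      (fun s : ℂ => (s ^ 2 - 1) / 8) '' auxS := by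
  ext w
  simp only [Set.mem_compl_iff, Set.mem_setOf_eq, Set.mem_image, not_exists, not_and]
  constructor
  · intro hw
    -- find a square root of 1 + 8w with nonneg real part
    have hex : ∃ s : ℂ, s ^ 2 = 1 + 8 * w := by
      rcases eq_or_ne (1 + 8 * w) 0 with h0 | h0
      · exact ⟨0, by rw [h0]; ring⟩
      · refine ⟨Complex.exp (Complex.log (1 + 8 * w) / 2), ?_⟩
        rw [← Complex.exp_nat_mul]
        push_cast
        rw [show (2 : ℂ) * (Complex.log (1 + 8 * w) / 2) = Complex.log (1 + 8 * w) by ring]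
        exact Complex.exp_log h0
    obtain ⟨s₀, hs₀⟩ := hex
    obtain ⟨s, hs, hres⟩ : ∃ s : ℂ, s ^ 2 = 1 + 8 * w ∧ 0 ≤ s.re := by
      rcases le_total 0 s₀.re with h | h
      · exact ⟨s₀, hs₀, h⟩
      · exact ⟨-s₀, by rw [neg_pow]; simpa using hs₀, by simpa using neg_nonneg.mpr h⟩
    refine ⟨s, ⟨hres, ?_⟩, ?_⟩
    · -- if |s-1| ≤ 2 then z = (s-1)/2 witnesses w ∈ K
      by_contra hle
      push_neg at hle
      have hz : ‖(s - 1) / 2‖ ≤ 1 := by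
        rw [norm_div, Complex.norm_two]
        linarith
      exact hw ((s - 1) / 2) hz (by linear_combination (-1/8 : ℂ) * hs)
    · linear_combination hs / 8
  · rintro ⟨s, ⟨hres, habs⟩, rfl⟩ z hz hwz
    -- z satisfies z^2 + z = (s^2-1)/4, so 2z+1 = ±s
    have hroot : (2 * z + 1 - s) * (2 * z + 1 + s) = 0 := by
      linear_combination (-8 : ℂ) * hwz
    rcases mul_eq_zero.1 hroot with h | h
    · have hzs : z = (s - 1) / 2 := by linear_combination h / 2
      have : ‖z‖ = ‖s - 1‖ / 2 := by
        rw [hzs, norm_div, Complex.norm_two]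
      rw [this] at hz
      linarith
    · have hzs : z = -(s + 1) / 2 := by linear_combination h / 2
      have habs1 : ‖s + 1‖ ^ 2 = ‖s - 1‖ ^ 2 + 4 * s.re := by
        rw [Complex.sq_norm, Complex.sq_norm, Complex.normSq_apply, Complex.normSq_apply]
        simp [Complex.add_re, Complex.add_im, Complex.sub_re, Complex.sub_im]
        ring
      have h2 : 2 < ‖s + 1‖ := by
        nlinarith [norm_nonneg (s + 1),
          norm_nonneg (s - 1)]
      have : ‖z‖ = ‖s + 1‖ / 2 := by
        rw [hzs, norm_div, Complex.norm_two, norm_neg]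
      rw [this] at hz
      linarith

/-- The complement in `ℂ` of `K = { (z+z²)/2 : |z| ≤ 1 }` is connected;
in particular it has no bounded connected components. -/
theorem stmt_12 :
    IsConnected ({w : ℂ | ∃ z : ℂ, ‖z‖ ≤ 1 ∧ w = (z + z ^ 2) / 2}ᶜ) := by
  rw [aux_compl_eq]
  exact auxS_pathConnected.isConnected.image _ (Continuous.continuousOn (by continuity))
end
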